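/- arXiv:2202.06289 — 5 statements merged into one kernel-verified Lean document; each statement's English description precedes it below -/
import Mathlib

section
/- Let h : X → ℝ be continuous on a compact metric space X with both {h > 0} and {h ≤ 0} nonempty. Then there exist positive non-decreasing functions δ₁, δ₂ : (0,1) → ℝ with δ₁(r) → 0 and δ₂(r) → 0 as r → 0, such that for all r ∈ (0,1): ({h > 0})_{-δ₁(r)} ⊆ {h ≥ r} ⊆ ({h > 0})_{-δ₂(r)}. -/
open Metric Set MeasureTheory Filter Topology

noncomputable def minusSet {X : Type*} [MetricSpace X] (A : Set X) (δ : ℝ) : Set X :=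
  {x | ENNReal.ofReal δ ≤ EMetric.infEdist x Aᶜ}

/-!
With `C = {h ≤ 0}` and `g = d(·, C)`, the inner inclusion holds for
`δ₁ r = r + sup {g x | h x ≤ r}` and the outer one for
`δ₂ r = min r (inf {g x | r ≤ h x})`.
Compactness does the rest: `h` is bounded below by a positive constant on the compact set
`{g ≥ ε}`, so the supremum tends to `0`, and the compact set `{h ≥ r}` has positive distance
from the closed set `C` disjoint from it, so the infimum is positive.
-/

noncomputable section

section SublevelSup

variable {X : Type*} {f g : X → ℝ}

def sublevelSup (f g : X → ℝ) (r : ℝ) : ℝ :=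
  sSup (g '' {x | f x ≤ r})

theorem sublevelSup_le {r ε : ℝ} (hne : {x | f x ≤ r}.Nonempty)
    (hε : ∀ x, f x ≤ r → g x ≤ ε) : sublevelSup f g r ≤ ε :=
  csSup_le (hne.image g) (forall_mem_image.2 hε)

variable [TopologicalSpace X] [CompactSpace X]

theorem le_sublevelSup (hg : Continuous g) {x : X} {r : ℝ} (hx : f x ≤ r) :
    g x ≤ sublevelSup f g r :=
  le_csSup ((isCompact_range hg).bddAbove.mono (image_subset_range _ _)) (mem_image_of_mem g hx)

theorem monotoneOn_sublevelSup (hg : Continuous g) {s : Set ℝ}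
    (hne : ∀ r ∈ s, {x | f x ≤ r}.Nonempty) :
    MonotoneOn (sublevelSup f g) s := fun _ hr _ _ hrr' =>
  sublevelSup_le (hne _ hr) fun _ hx => le_sublevelSup hg (hx.trans hrr')

theorem exists_pos_forall_lt_of_sublevel_zero (hf : Continuous f) (hg : Continuous g)
    (hg0 : ∀ x, f x ≤ 0 → g x = 0) {ε : ℝ} (hε : 0 < ε) :
    ∃ c > 0, ∀ x, f x < c → g x < ε := by
  have hpos : ∀ x ∈ {x | ε ≤ g x}, 0 < f x := fun x hx =>
    lt_of_not_ge fun hfx => (hg0 x hfx ▸ hx : ε ≤ 0).not_gt hε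
  obtain ⟨c, hc, hcf⟩ :=
    (isClosed_le continuous_const hg).isCompact.exists_forall_le' hf.continuousOn hpos
  exact ⟨c, hc, fun x hx => lt_of_not_ge fun hgx => (hcf x hgx).not_gt hx⟩

theorem tendsto_sublevelSup (hf : Continuous f) (hg : Continuous g)
    (hg0 : ∀ x, f x ≤ 0 → g x = 0) (hne : {x | f x ≤ 0}.Nonempty) :
    Tendsto (sublevelSup f g) (𝓝[>] 0) (𝓝 0) := by
  obtain ⟨x₀, hx₀⟩ := hne
  refine tendsto_order.2 ⟨fun a ha => ?_, fun a ha => ?_⟩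
  · filter_upwards [self_mem_nhdsWithin] with r (hr : 0 < r)
    exact ha.trans_le (hg0 x₀ hx₀ ▸ le_sublevelSup hg (hx₀.trans hr.le))
  · obtain ⟨c, hc, hgc⟩ := exists_pos_forall_lt_of_sublevel_zero hf hg hg0 (half_pos ha)
    filter_upwards [Ioo_mem_nhdsGT hc] with r hr
    calc sublevelSup f g r ≤ a / 2 :=
          sublevelSup_le ⟨x₀, hx₀.trans hr.1.le⟩ fun x hx => (hgc x (hx.trans_lt hr.2)).le
      _ < a := half_lt_self ha

end SublevelSup

section MinusSet

variable {X : Type*} [MetricSpace X] {A K : Set X} {δ : ℝ}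

theorem mem_minusSet_iff (hA : Aᶜ.Nonempty) {x : X} :
    x ∈ minusSet A δ ↔ δ ≤ infDist x Aᶜ :=
  ENNReal.ofReal_le_iff_le_toReal (infEDist_ne_top hA)

theorem subset_minusSet_iff :
    K ⊆ minusSet A δ ↔ ENNReal.ofReal δ ≤ ⨅ x ∈ K, infEDist x Aᶜ :=
  ⟨fun hK => le_iInf₂ hK, fun hle x hx => hle.trans (iInf₂_le x hx)⟩

theorem iInf_infEDist_pos_of_disjoint {C : Set X} (hK : IsCompact K) (hC : IsClosed C)
    (hKC : Disjoint K C) : 0 < ⨅ x ∈ K, infEDist x C := by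
  obtain ⟨ρ, hρ, hlt⟩ := exists_pos_forall_lt_edist hK hC hKC
  exact (ENNReal.coe_pos.2 hρ).trans_le
    (le_iInf₂ fun x hx => le_infEDist.2 fun y hy => (hlt x hx y hy).le)

end MinusSet

section MinToReal

variable {m : ℝ → ENNReal}

/-- The cap `r` keeps the minimum finite, so `toReal` loses nothing. -/
def minToReal (m : ℝ → ENNReal) (r : ℝ) : ℝ :=
  (min (ENNReal.ofReal r) (m r)).toReal

theorem min_ofReal_ne_top (r : ℝ) : min (ENNReal.ofReal r) (m r) ≠ ⊤ :=
  ne_top_of_le_ne_top ENNReal.ofReal_ne_top (min_le_left _ _)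

theorem ofReal_minToReal_le (r : ℝ) : ENNReal.ofReal (minToReal m r) ≤ m r := by
  rw [minToReal, ENNReal.ofReal_toReal (min_ofReal_ne_top r)]
  exact min_le_right _ _

theorem minToReal_pos {r : ℝ} (hr : 0 < r) (hm : 0 < m r) : 0 < minToReal m r :=
  ENNReal.toReal_pos (lt_min (ENNReal.ofReal_pos.2 hr) hm).ne' (min_ofReal_ne_top r)

theorem monotoneOn_minToReal {s : Set ℝ} (hm : MonotoneOn m s) : MonotoneOn (minToReal m) s :=
  fun _ hr _ hr' hrr' => ENNReal.toReal_mono (min_ofReal_ne_top _)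
    (min_le_min (ENNReal.ofReal_le_ofReal hrr') (hm hr hr' hrr'))

theorem tendsto_minToReal : Tendsto (minToReal m) (𝓝[>] 0) (𝓝 0) := by
  refine tendsto_of_tendsto_of_tendsto_of_le_of_le' tendsto_const_nhds
    (tendsto_nhdsWithin_of_tendsto_nhds tendsto_id)
    (Eventually.of_forall fun _ => ENNReal.toReal_nonneg) ?_
  filter_upwards [self_mem_nhdsWithin] with r (hr : 0 < r)
  calc minToReal m r ≤ (ENNReal.ofReal r).toReal :=
        ENNReal.toReal_mono ENNReal.ofReal_ne_top (min_le_left _ _)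
    _ = r := ENNReal.toReal_ofReal hr.le

end MinToReal

end

theorem levelSet_sandwich_general {X : Type*} [MetricSpace X] [CompactSpace X]
    (h : X → ℝ) (hcont : Continuous h)
    (hnonpos : {x | h x ≤ 0}.Nonempty) :
    ∃ δ₁ δ₂ : ℝ → ℝ,
      (∀ r ∈ Set.Ioo (0:ℝ) 1, 0 < δ₁ r) ∧ (∀ r ∈ Set.Ioo (0:ℝ) 1, 0 < δ₂ r) ∧
      MonotoneOn δ₁ (Set.Ioo (0:ℝ) 1) ∧ MonotoneOn δ₂ (Set.Ioo (0:ℝ) 1) ∧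
      Tendsto δ₁ (nhdsWithin 0 (Set.Ioi 0)) (nhds 0) ∧
      Tendsto δ₂ (nhdsWithin 0 (Set.Ioi 0)) (nhds 0) ∧
      ∀ r ∈ Set.Ioo (0:ℝ) 1,
        minusSet {x | 0 < h x} (δ₁ r) ⊆ {x | r ≤ h x} ∧
        {x | r ≤ h x} ⊆ minusSet {x | 0 < h x} (δ₂ r) := by
  set g : X → ℝ := (infDist · {x | 0 < h x}ᶜ)
  have hg : Continuous g := continuous_infDist_pt _
  have hg0 (x) (hx : h x ≤ 0) : g x = 0 := infDist_zero_of_mem (by simpa using hx)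
  have hS0 {r : ℝ} (hr : 0 ≤ r) : 0 ≤ sublevelSup h g r := by
    obtain ⟨x₀, hx₀⟩ := hnonpos
    exact hg0 x₀ hx₀ ▸ le_sublevelSup hg (hx₀.trans hr)
  set m : ℝ → ENNReal := fun r => ⨅ x ∈ {x | r ≤ h x}, infEDist x {x | 0 < h x}ᶜ
  have hm : MonotoneOn m (Ioo 0 1) := fun _ _ _ _ hrr' =>
    biInf_mono fun _ (hx : _ ≤ h _) => hrr'.trans hx
  have hm0 {r : ℝ} (hr : 0 < r) : 0 < m r := by
    refine iInf_infEDist_pos_of_disjoint (isClosed_le continuous_const hcont).isCompact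
      (isOpen_lt continuous_const hcont).isClosed_compl ?_
    exact disjoint_left.2 fun x (hx : r ≤ h x) hxC => hxC (hr.trans_le hx)
  refine ⟨fun r => r + sublevelSup h g r, minToReal m,
    fun r hr => add_pos_of_pos_of_nonneg hr.1 (hS0 hr.1.le),
    fun r hr => minToReal_pos hr.1 (hm0 hr.1),
    monotoneOn_id.add
      (monotoneOn_sublevelSup hg fun r hr => hnonpos.mono fun x hx => hx.trans hr.1.le),
    monotoneOn_minToReal hm, ?_, tendsto_minToReal, fun r hr => ⟨fun x hx => ?_, ?_⟩⟩
  · simpa using (tendsto_nhdsWithin_of_tendsto_nhds tendsto_id).add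
      (tendsto_sublevelSup hcont hg hg0 hnonpos)
  · rw [mem_minusSet_iff (by simpa only [compl_ofPred, not_lt] using hnonpos)] at hx
    show r ≤ h x
    by_contra! hlt
    linarith [le_sublevelSup (f := h) hg hlt.le, hr.1]
  · exact subset_minusSet_iff.2 (ofReal_minToReal_le r)

/-- Sandwiching super-level sets of a continuous function between inner δ-sets of `{h > 0}`. -/
theorem levelSet_sandwich {X : Type*} [MetricSpace X] [CompactSpace X]
    (h : X → ℝ) (hcont : Continuous h)
    (hpos : {x | 0 < h x}.Nonempty) (hnonpos : {x | h x ≤ 0}.Nonempty) :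
    ∃ δ₁ δ₂ : ℝ → ℝ,
      (∀ r ∈ Set.Ioo (0:ℝ) 1, 0 < δ₁ r) ∧ (∀ r ∈ Set.Ioo (0:ℝ) 1, 0 < δ₂ r) ∧
      MonotoneOn δ₁ (Set.Ioo (0:ℝ) 1) ∧ MonotoneOn δ₂ (Set.Ioo (0:ℝ) 1) ∧
      Tendsto δ₁ (nhdsWithin 0 (Set.Ioi 0)) (nhds 0) ∧
      Tendsto δ₂ (nhdsWithin 0 (Set.Ioi 0)) (nhds 0) ∧
      ∀ r ∈ Set.Ioo (0:ℝ) 1,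
        minusSet {x | 0 < h x} (δ₁ r) ⊆ {x | r ≤ h x} ∧
        {x | r ≤ h x} ⊆ minusSet {x | 0 < h x} (δ₂ r) :=
  levelSet_sandwich_general h hcont hnonpos
end

section
/- Let μ be a finite Borel measure on Γ, g : Γ → ℝ integrable, S ⊆ Γ with μ(S) > 0, and define Λ_S := sup { ⨍_A g dμ : A measurable, S ⊆ A }. If A, B are measurable sets with S ⊆ A ∩ B, then Λ_S − ⨍_{A∪B} g dμ ≤ (Λ_S − ⨍_A g dμ) + (Λ_S − ⨍_B g dμ). -/
/-! For a fixed level `c`, the unnormalised deficit `u ↦ μ(u) c - ∫_u f` is modular (it is a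
difference of two additive set functions) and nonnegative on every set whose average is at most
`c`. Dropping the term of `s ∩ t` from the modular identity bounds the deficit of `s ∪ t` by
those of `s` and `t`; dividing by `μ(s ∪ t)`, which dominates `μ(s)` and `μ(t)`, only enlarges
the right-hand side. With `c = Λ_S` every superset of `S` qualifies. -/

open Set MeasureTheory
open scoped ENNReal

/-- `Λ_S = sup { ⨍_A g dμ : A measurable, S ⊆ A }`. -/
noncomputable def lambdaSup {Γ : Type*} [MeasurableSpace Γ]
    (μ : MeasureTheory.Measure Γ) (g : Γ → ℝ) (S : Set Γ) : ℝ :=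
  sSup {r : ℝ | ∃ A : Set Γ, MeasurableSet A ∧ S ⊆ A ∧ r = ⨍ x in A, g x ∂μ}

namespace MeasureTheory

variable {α : Type*} [MeasurableSpace α] {μ : Measure α} {s t : Set α}

theorem setIntegral_union_add_inter {E : Type*} [NormedAddCommGroup E] [NormedSpace ℝ E]
    {f : α → E} (ht : MeasurableSet t) (hf : IntegrableOn f (s ∪ t) μ) :
    ∫ x in s ∪ t, f x ∂μ + ∫ x in s ∩ t, f x ∂μ = ∫ x in s, f x ∂μ + ∫ x in t, f x ∂μ := by
  have hunion := integral_inter_add_sdiff ht hf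
  have hs := integral_inter_add_sdiff ht (hf.mono_set subset_union_left)
  rw [union_inter_cancel_right, union_sdiff_right] at hunion
  rw [← hunion, ← hs]
  abel

variable {f : α → ℝ} {c : ℝ}

theorem setIntegral_le_measureReal_mul_of_setAverage_le (hs : μ s ≠ ∞)
    (hc : ⨍ x in s, f x ∂μ ≤ c) : ∫ x in s, f x ∂μ ≤ μ.real s * c := by
  rcases eq_or_ne (μ s) 0 with hs0 | hs0
  · simp [Measure.restrict_eq_zero.2 hs0, measureReal_def, hs0]
  · have hpos : 0 < μ.real s := ENNReal.toReal_pos hs0 hs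
    rwa [setAverage_eq, smul_eq_mul, inv_mul_le_iff₀ hpos] at hc

theorem sub_setAverage_eq (hs0 : μ s ≠ 0) (hs : μ s ≠ ∞) :
    c - ⨍ x in s, f x ∂μ = (μ.real s)⁻¹ * (μ.real s * c - ∫ x in s, f x ∂μ) := by
  have hpos : 0 < μ.real s := ENNReal.toReal_pos hs0 hs
  rw [setAverage_eq, smul_eq_mul]
  field_simp

theorem sub_setAverage_union_le [IsFiniteMeasure μ] (hf : Integrable f μ) (ht : MeasurableSet t)
    (hs0 : μ s ≠ 0) (ht0 : μ t ≠ 0) (hsc : ⨍ x in s, f x ∂μ ≤ c)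
    (htc : ⨍ x in t, f x ∂μ ≤ c) (hstc : ⨍ x in s ∩ t, f x ∂μ ≤ c) :
    c - ⨍ x in s ∪ t, f x ∂μ ≤ (c - ⨍ x in s, f x ∂μ) + (c - ⨍ x in t, f x ∂μ) := by
  set deficit : Set α → ℝ := fun u ↦ μ.real u * c - ∫ x in u, f x ∂μ
  have modular : deficit (s ∪ t) + deficit (s ∩ t) = deficit s + deficit t := by
    linear_combination c * measureReal_union_add_inter (μ := μ) (s := s) ht
      - setIntegral_union_add_inter ht hf.integrableOn
  have nonneg {u : Set α} (hu : ⨍ x in u, f x ∂μ ≤ c) : 0 ≤ deficit u :=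
    sub_nonneg.2 (setIntegral_le_measureReal_mul_of_setAverage_le (measure_ne_top μ u) hu)
  have hs_pos : 0 < μ.real s := ENNReal.toReal_pos hs0 (measure_ne_top μ s)
  have ht_pos : 0 < μ.real t := ENNReal.toReal_pos ht0 (measure_ne_top μ t)
  have hs_le : μ.real s ≤ μ.real (s ∪ t) := measureReal_mono subset_union_left
  have ht_le : μ.real t ≤ μ.real (s ∪ t) := measureReal_mono subset_union_right
  rw [sub_setAverage_eq hs0 (measure_ne_top μ s), sub_setAverage_eq ht0 (measure_ne_top μ t),
    sub_setAverage_eq (fun h ↦ hs0 (measure_mono_null subset_union_left h)) (measure_ne_top μ _)]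
  calc (μ.real (s ∪ t))⁻¹ * deficit (s ∪ t)
      ≤ (μ.real (s ∪ t))⁻¹ * deficit s + (μ.real (s ∪ t))⁻¹ * deficit t := by
        rw [← mul_add]
        gcongr
        linarith [nonneg hstc]
    _ ≤ (μ.real s)⁻¹ * deficit s + (μ.real t)⁻¹ * deficit t := by
        gcongr
        exacts [nonneg hsc, nonneg htc]

end MeasureTheory

theorem setAverage_le_lambdaSup {Γ : Type*} [MeasurableSpace Γ] {μ : Measure Γ} {g : Γ → ℝ}
    {S A : Set Γ}
    (hbdd : BddAbove {r : ℝ | ∃ A : Set Γ, MeasurableSet A ∧ S ⊆ A ∧ r = ⨍ x in A, g x ∂μ})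
    (hA : MeasurableSet A) (hSA : S ⊆ A) : ⨍ x in A, g x ∂μ ≤ lambdaSup μ g S :=
  le_csSup hbdd ⟨A, hA, hSA, rfl⟩

/-- Subadditivity of the deficit `Λ_S − ⨍ g` under unions. -/
theorem lambdaSup_deficit_subadditive {Γ : Type*} [MeasurableSpace Γ]
    (μ : MeasureTheory.Measure Γ) [IsFiniteMeasure μ]
    (g : Γ → ℝ) (hg : Integrable g μ)
    (S : Set Γ) (hμS : 0 < μ S)
    (hbdd : BddAbove {r : ℝ | ∃ A : Set Γ, MeasurableSet A ∧ S ⊆ A ∧ r = ⨍ x in A, g x ∂μ})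
    (A B : Set Γ) (hA : MeasurableSet A) (hB : MeasurableSet B)
    (hSA : S ⊆ A) (hSB : S ⊆ B) :
    lambdaSup μ g S - ⨍ x in A ∪ B, g x ∂μ ≤
      (lambdaSup μ g S - ⨍ x in A, g x ∂μ) + (lambdaSup μ g S - ⨍ x in B, g x ∂μ) := by
  have measure_ne_zero {C : Set Γ} (hSC : S ⊆ C) : μ C ≠ 0 :=
    (hμS.trans_le (measure_mono hSC)).ne'
  exact sub_setAverage_union_le hg hB (measure_ne_zero hSA) (measure_ne_zero hSB)
    (setAverage_le_lambdaSup hbdd hA hSA) (setAverage_le_lambdaSup hbdd hB hSB)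
    (setAverage_le_lambdaSup hbdd (hA.inter hB) (subset_inter hSA hSB))
end

section
/- Let μ be a finite Borel measure on Γ, 0 < g < 1 a continuous function on Γ, and S ⊆ Γ with μ(S) > 0. Define Λ_S := sup { ⨍_A g dμ : A measurable, S ⊆ A }. Then the supremum is attained; in fact, for any sequence of admissible sets A_k with ⨍_{A_k} g dμ ≥ Λ_S − 2^{−k−1}, the set A^∞ := limsup_k A_k satisfies S ⊆ A^∞ and ⨍_{A^∞} g dμ = Λ_S. -/
open Set MeasureTheory

/-!
Put `Λ := Λ_S` and `φ(B) := ∫_B (Λ - g) dμ = μ(B) (Λ - ⨍_B g dμ)`. Then `φ` is additive and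
`φ ≥ 0` on measurable supersets of `S`, hence subadditive on them (the excess `φ(X ∩ Y)` is
nonnegative), and countably subadditive by monotone convergence. The hypothesis says
`φ(A_k) ≤ 2^{-k-1} μ(Γ)`, so `φ(⋃_{k ≥ N} A_k) ≤ 2^{-N} μ(Γ)`, and letting `N → ∞` gives
`φ(limsup_k A_k) = 0`, i.e. the average of `g` over `limsup_k A_k` is `Λ`.
-/

open Filter Topology

lemma Set.subset_iInter_iUnion_ge {α : Type*} {S : Set α} {A : ℕ → Set α} (hSA : ∀ k, S ⊆ A k) :
    S ⊆ ⋂ N, ⋃ k ≥ N, A k :=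
  subset_iInter fun N _ hx => mem_iUnion₂.2 ⟨N, le_rfl, hSA N hx⟩

section SetIntegral

variable {α : Type*} [MeasurableSpace α] {μ : Measure α} {f : α → ℝ} {S : Set α}

lemma measureReal_pos_of_subset [IsFiniteMeasure μ] {T : Set α} (hμS : 0 < μ S) (hST : S ⊆ T) :
    0 < μ.real T :=
  ENNReal.toReal_pos (hμS.trans_le (measure_mono hST)).ne' (measure_ne_top μ T)

lemma setIntegral_const_sub_eq_measureReal_mul [IsFiniteMeasure μ] {s : Set α}
    (hf : IntegrableOn f s μ) (c : ℝ) :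
    ∫ x in s, (c - f x) ∂μ = μ.real s * (c - ⨍ x in s, f x ∂μ) := by
  rw [integral_sub (integrable_const c) hf, setIntegral_const, smul_eq_mul,
    ← measure_smul_setAverage f (measure_ne_top μ s), smul_eq_mul, mul_sub]

lemma setAverage_le_of_forall_le [IsFiniteMeasure μ] {s : Set α} {c : ℝ}
    (hs : MeasurableSet s) (hf : IntegrableOn f s μ) (hμs : 0 < μ.real s)
    (hfc : ∀ x ∈ s, f x ≤ c) : ⨍ x in s, f x ∂μ ≤ c := by
  have h : 0 ≤ ∫ x in s, (c - f x) ∂μ := setIntegral_nonneg hs fun x hx => sub_nonneg.2 (hfc x hx)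
  rw [setIntegral_const_sub_eq_measureReal_mul hf] at h
  exact sub_nonneg.1 (nonneg_of_mul_nonneg_right h hμs)

lemma setIntegral_union_le_add (hf : Integrable f μ) {X Y : Set α} (hX : MeasurableSet X)
    (hY : MeasurableSet Y) (hXY : 0 ≤ ∫ x in X ∩ Y, f x ∂μ) :
    ∫ x in X ∪ Y, f x ∂μ ≤ ∫ x in X, f x ∂μ + ∫ x in Y, f x ∂μ := by
  have hsplit : ∫ x in X ∪ Y, f x ∂μ = ∫ x in X, f x ∂μ + ∫ x in Y \ X, f x ∂μ := by
    rw [← union_sdiff_self]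
    exact setIntegral_union disjoint_sdiff_self_right (hY.diff hX) hf.integrableOn hf.integrableOn
  have hY_split := integral_inter_add_sdiff hX hf.integrableOn (s := Y)
  rw [inter_comm] at hY_split
  linarith

lemma setIntegral_accumulate_le_sum (hf : Integrable f μ)
    (hS : ∀ B, MeasurableSet B → S ⊆ B → 0 ≤ ∫ x in B, f x ∂μ) {A : ℕ → Set α}
    (hA : ∀ k, MeasurableSet (A k)) (hSA : ∀ k, S ⊆ A k) (n : ℕ) :
    ∫ x in accumulate A n, f x ∂μ ≤ ∑ k ∈ Finset.range (n + 1), ∫ x in A k, f x ∂μ := by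
  induction n with
  | zero => simp
  | succ n ih =>
    have hmeas : MeasurableSet (accumulate A n) := .biUnion (to_countable _) fun k _ => hA k
    have hS_inter : S ⊆ accumulate A n ∩ A (n + 1) :=
      subset_inter ((hSA 0).trans (subset_accumulate.trans (monotone_accumulate n.zero_le)))
        (hSA _)
    rw [accumulate_succ, Finset.sum_range_succ]
    have := setIntegral_union_le_add hf hmeas (hA _) (hS _ (hmeas.inter (hA _)) hS_inter)
    linarith

lemma setIntegral_iUnion_le_tsum (hf : Integrable f μ)
    (hS : ∀ B, MeasurableSet B → S ⊆ B → 0 ≤ ∫ x in B, f x ∂μ) {A : ℕ → Set α}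
    (hA : ∀ k, MeasurableSet (A k)) (hSA : ∀ k, S ⊆ A k) {ε : ℕ → ℝ}
    (hAε : ∀ k, ∫ x in A k, f x ∂μ ≤ ε k) (hε : Summable ε) :
    ∫ x in ⋃ k, A k, f x ∂μ ≤ ∑' k, ε k := by
  have hlim : Tendsto (fun n => ∫ x in accumulate A n, f x ∂μ) atTop
      (𝓝 (∫ x in ⋃ k, A k, f x ∂μ)) := by
    rw [← iUnion_accumulate]
    exact tendsto_setIntegral_of_monotone (fun n => .biUnion (to_countable _) fun k _ => hA k)
      monotone_accumulate hf.integrableOn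
  refine le_of_tendsto' hlim fun n => (setIntegral_accumulate_le_sum hf hS hA hSA n).trans ?_
  calc ∑ k ∈ Finset.range (n + 1), ∫ x in A k, f x ∂μ
      ≤ ∑ k ∈ Finset.range (n + 1), ε k := Finset.sum_le_sum fun k _ => hAε k
    _ ≤ ∑' k, ε k := hε.sum_le_tsum _ fun k _ => (hS _ (hA k) (hSA k)).trans (hAε k)

lemma setIntegral_limsup_eq_zero (hf : Integrable f μ)
    (hS : ∀ B, MeasurableSet B → S ⊆ B → 0 ≤ ∫ x in B, f x ∂μ) {A : ℕ → Set α}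
    (hA : ∀ k, MeasurableSet (A k)) (hSA : ∀ k, S ⊆ A k) {ε : ℕ → ℝ}
    (hAε : ∀ k, ∫ x in A k, f x ∂μ ≤ ε k) (hε : Summable ε) :
    ∫ x in ⋂ N, ⋃ k ≥ N, A k, f x ∂μ = 0 := by
  have htail_meas : ∀ N, MeasurableSet (⋃ k ≥ N, A k) := fun N =>
    .biUnion (to_countable _) fun k _ => hA k
  have htail_anti : Antitone fun N => ⋃ k ≥ N, A k := fun _ _ hNM =>
    biUnion_subset_biUnion_left fun _ hk => le_trans hNM hk
  have hlim := tendsto_setIntegral_of_antitone htail_meas htail_anti ⟨0, hf.integrableOn⟩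
  have htail : ∀ N, ∫ x in ⋃ k ≥ N, A k, f x ∂μ ≤ ∑' k, ε (k + N) := fun N => by
    rw [iUnion_ge_eq_iUnion_nat_add]
    exact setIntegral_iUnion_le_tsum hf hS (fun k => hA _) (fun k => hSA _) (fun k => hAε _)
      ((summable_nat_add_iff N).2 hε)
  refine le_antisymm (le_of_tendsto_of_tendsto' hlim (tendsto_sum_nat_add ε) htail) ?_
  exact hS _ (.iInter fun N => htail_meas N) (subset_iInter_iUnion_ge hSA)

lemma setAverage_le_lambdaSup_s8 [IsFiniteMeasure μ] (hf : Integrable f μ) (hf1 : ∀ x, f x ≤ 1)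
    (hμS : 0 < μ S) {B : Set α} (hB : MeasurableSet B) (hSB : S ⊆ B) :
    ⨍ x in B, f x ∂μ ≤ lambdaSup μ f S := by
  refine le_csSup ⟨1, ?_⟩ ⟨B, hB, hSB, rfl⟩
  rintro _ ⟨C, hC, hSC, rfl⟩
  exact setAverage_le_of_forall_le hC hf.integrableOn (measureReal_pos_of_subset hμS hSC)
    fun x _ => hf1 x

end SetIntegral

/-- The supremum `Λ_S` is attained: for an almost maximizing sequence `A k`, the set
`limsup_k A_k` contains `S` and its average equals `Λ_S`. -/
theorem lambdaSup_attained {Γ : Type*} [TopologicalSpace Γ] [MeasurableSpace Γ]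
    [BorelSpace Γ] (μ : MeasureTheory.Measure Γ) [IsFiniteMeasure μ]
    (g : Γ → ℝ) (hgcont : Continuous g) (hg0 : ∀ x, 0 < g x) (hg1 : ∀ x, g x < 1)
    (S : Set Γ) (hμS : 0 < μ S)
    (A : ℕ → Set Γ) (hAmeas : ∀ k, MeasurableSet (A k)) (hSA : ∀ k, S ⊆ A k)
    (hAavg : ∀ k, lambdaSup μ g S - ((2 : ℝ) ^ (k + 1))⁻¹ ≤ ⨍ x in A k, g x ∂μ) :
    S ⊆ (⋂ N, ⋃ k ≥ N, A k) ∧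
    ⨍ x in ⋂ N, ⋃ k ≥ N, A k, g x ∂μ = lambdaSup μ g S := by
  have hg : Integrable g μ := (integrable_const (1 : ℝ)).mono' hgcont.aestronglyMeasurable
    (.of_forall fun x => by rw [Real.norm_eq_abs, abs_of_pos (hg0 x)]; exact (hg1 x).le)
  set Λ := lambdaSup μ g S
  have hdefect : ∀ B, ∫ x in B, (Λ - g x) ∂μ = μ.real B * (Λ - ⨍ x in B, g x ∂μ) := fun B =>
    setIntegral_const_sub_eq_measureReal_mul hg.integrableOn Λ
  have hle : ∀ B, MeasurableSet B → S ⊆ B → ⨍ x in B, g x ∂μ ≤ Λ := fun B hB hSB =>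
    setAverage_le_lambdaSup_s8 hg (fun x => (hg1 x).le) hμS hB hSB
  have hnonneg : ∀ B, MeasurableSet B → S ⊆ B → 0 ≤ ∫ x in B, (Λ - g x) ∂μ := fun B hB hSB => by
    rw [hdefect]; exact mul_nonneg measureReal_nonneg (sub_nonneg.2 (hle B hB hSB))
  have hsmall : ∀ k, ∫ x in A k, (Λ - g x) ∂μ ≤ μ.real univ / 2 / 2 ^ k := fun k => by
    rw [hdefect]
    calc μ.real (A k) * (Λ - ⨍ x in A k, g x ∂μ) ≤ μ.real univ * ((2 : ℝ) ^ (k + 1))⁻¹ :=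
          mul_le_mul (measureReal_mono (subset_univ _)) (by linarith [hAavg k])
            (sub_nonneg.2 (hle _ (hAmeas k) (hSA k))) measureReal_nonneg
      _ = μ.real univ / 2 / 2 ^ k := by rw [pow_succ]; field_simp
  have hzero := setIntegral_limsup_eq_zero (f := fun x => Λ - g x) ((integrable_const Λ).sub hg)
    hnonneg hAmeas hSA hsmall (summable_geometric_two' _)
  have hS_limsup := subset_iInter_iUnion_ge hSA
  rw [hdefect] at hzero
  have hpos := measureReal_pos_of_subset hμS hS_limsup
  exact ⟨hS_limsup, by linarith [(mul_eq_zero.1 hzero).resolve_left hpos.ne']⟩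
end

section
/- Let μ be a finite Borel measure on Γ, g : Γ → ℝ measurable and bounded, S ⊆ Γ with μ(S) > 0, Λ_S := sup { ⨍_A g dμ : A measurable, S ⊆ A }, and A* := S ∪ {g ≥ Λ_S}. Then: (i) A* attains the supremum, i.e. ⨍_{A*} g dμ = Λ_S; (ii) every maximizer A^∞ (an admissible set with ⨍_{A^∞} g dμ = Λ_S) satisfies μ(A^∞ \ A*) = 0; and (iii) if μ({g = Λ_S} ∩ Sᶜ) = 0, then any maximizer equals A* up to a μ-null set. -/
open Set MeasureTheory

/-! The bathtub principle. For `A ⊇ S` one has pointwise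
`1_A (g - Λ) ≤ 1_{A*} (g - Λ)`, because `A*` adds to `S` exactly the points where `g - Λ ≥ 0`.
Integrating, `∫_A (g - Λ) ≤ ∫_{A*} (g - Λ) ≤ 0`, and the left side vanishes for a maximizer
(one exists by assumption), so `A*` is a maximizer. For any maximizer `A` the two indicators
then have equal integrals, hence agree a.e.; they differ on all of `A \ A*` and on the part of
`A* \ A` where `g ≠ Λ`. -/

section Indicator

variable {Γ : Type*} {g : Γ → ℝ} {c : ℝ} {S A : Set Γ}

theorem indicator_sub_le_indicator_union_setOf_le (hSA : S ⊆ A) :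
    A.indicator (fun x => g x - c) ≤ (S ∪ {x | c ≤ g x}).indicator (fun x => g x - c) := by
  intro x
  by_cases hxS : x ∈ S
  · simp [hxS, hSA hxS]
  by_cases hcx : c ≤ g x
  · rw [indicator_of_mem (mem_union_right S hcx)]
    exact indicator_apply_le' (fun _ => le_rfl) fun _ => sub_nonneg.2 hcx
  · have hx : x ∉ S ∪ {x | c ≤ g x} := fun h => h.elim hxS hcx
    rw [indicator_of_notMem hx]
    exact indicator_apply_nonpos fun _ => (sub_neg.2 (not_le.1 hcx)).le

theorem indicator_sub_ne_of_mem_diff {x : Γ} (hx : x ∈ A \ (S ∪ {x | c ≤ g x})) :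
    A.indicator (fun x => g x - c) x ≠ (S ∪ {x | c ≤ g x}).indicator (fun x => g x - c) x := by
  rw [indicator_of_mem hx.1, indicator_of_notMem hx.2]
  exact (sub_neg.2 (not_le.1 fun h => hx.2 (Or.inr h))).ne

theorem indicator_sub_ne_of_mem_diff_of_ne {x : Γ} (hx : x ∈ (S ∪ {x | c ≤ g x}) \ A)
    (hgx : g x ≠ c) :
    A.indicator (fun x => g x - c) x ≠ (S ∪ {x | c ≤ g x}).indicator (fun x => g x - c) x := by
  rw [indicator_of_notMem hx.2, indicator_of_mem hx.1]
  exact (sub_ne_zero.2 hgx).symm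

end Indicator

section SetAverage

variable {Γ : Type*} [MeasurableSpace Γ] {μ : Measure Γ} {g : Γ → ℝ} {c : ℝ} {S A : Set Γ}

theorem ae_eq_of_le_of_integral_eq {f₁ f₂ : Γ → ℝ} (hf₁ : Integrable f₁ μ)
    (hf₂ : Integrable f₂ μ) (hle : f₁ ≤ f₂) (heq : ∫ x, f₁ x ∂μ = ∫ x, f₂ x ∂μ) :
    f₁ =ᵐ[μ] f₂ := by
  have h : f₂ - f₁ =ᵐ[μ] 0 :=
    (integral_eq_zero_iff_of_nonneg (sub_nonneg.2 hle) (hf₂.sub hf₁)).1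
      (by rw [integral_sub' hf₂ hf₁, heq, sub_self])
  filter_upwards [h] with x hx
  exact (sub_eq_zero.1 hx).symm

theorem setIntegral_sub_const_eq_measureReal_mul [IsFiniteMeasure μ] (hg : IntegrableOn g A μ) :
    ∫ x in A, (g x - c) ∂μ = μ.real A * (⨍ x in A, g x ∂μ - c) := by
  rw [integral_sub hg (integrable_const c), setIntegral_const, mul_sub,
    ← smul_eq_mul, measure_smul_setAverage _ (measure_ne_top μ A), smul_eq_mul]

variable [IsFiniteMeasure μ]

theorem setAverage_le_iff_setIntegral_sub_nonpos (hg : IntegrableOn g A μ) (hμA : μ A ≠ 0) :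
    ⨍ x in A, g x ∂μ ≤ c ↔ ∫ x in A, (g x - c) ∂μ ≤ 0 := by
  have hpos : 0 < μ.real A := measureReal_nonneg.lt_of_ne' ((measureReal_ne_zero_iff).2 hμA)
  rw [setIntegral_sub_const_eq_measureReal_mul hg, ← mul_zero (μ.real A),
    mul_le_mul_iff_of_pos_left hpos, sub_nonpos]

theorem setAverage_eq_iff_setIntegral_sub_eq_zero (hg : IntegrableOn g A μ) (hμA : μ A ≠ 0) :
    ⨍ x in A, g x ∂μ = c ↔ ∫ x in A, (g x - c) ∂μ = 0 := by
  rw [setIntegral_sub_const_eq_measureReal_mul hg, mul_eq_zero_iff_left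
    ((measureReal_ne_zero_iff).2 hμA), sub_eq_zero]

theorem setAverage_le_of_forall_le_s9 (hA : MeasurableSet A) (hg : IntegrableOn g A μ)
    (hμA : μ A ≠ 0) (hgc : ∀ x ∈ A, g x ≤ c) : ⨍ x in A, g x ∂μ ≤ c :=
  (setAverage_le_iff_setIntegral_sub_nonpos hg hμA).2
    (setIntegral_nonpos hA fun x hx => sub_nonpos.2 (hgc x hx))

theorem setIntegral_sub_le_setIntegral_union_setOf_le (hg : Integrable g μ)
    (hA : MeasurableSet A) (hB : MeasurableSet (S ∪ {x | c ≤ g x})) (hSA : S ⊆ A) :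
    ∫ x in A, (g x - c) ∂μ ≤ ∫ x in S ∪ {x | c ≤ g x}, (g x - c) ∂μ := by
  rw [← integral_indicator hA, ← integral_indicator hB]
  exact integral_mono ((hg.sub (integrable_const c)).indicator hA)
    ((hg.sub (integrable_const c)).indicator hB) (indicator_sub_le_indicator_union_setOf_le hSA)

theorem indicator_sub_ae_eq_of_setIntegral_eq (hg : Integrable g μ)
    (hA : MeasurableSet A) (hB : MeasurableSet (S ∪ {x | c ≤ g x})) (hSA : S ⊆ A)
    (heq : ∫ x in A, (g x - c) ∂μ = ∫ x in S ∪ {x | c ≤ g x}, (g x - c) ∂μ) :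
    A.indicator (fun x => g x - c) =ᵐ[μ] (S ∪ {x | c ≤ g x}).indicator (fun x => g x - c) := by
  rw [← integral_indicator hA, ← integral_indicator hB] at heq
  exact ae_eq_of_le_of_integral_eq ((hg.sub (integrable_const c)).indicator hA)
    ((hg.sub (integrable_const c)).indicator hB) (indicator_sub_le_indicator_union_setOf_le hSA) heq

theorem setAverage_le_lambdaSup_s9 (hg : Integrable g μ) (hgc : ∀ x, g x ≤ c) (hμS : μ S ≠ 0)
    (hA : MeasurableSet A) (hSA : S ⊆ A) :
    ⨍ x in A, g x ∂μ ≤ lambdaSup μ g S := by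
  refine le_csSup ⟨c, ?_⟩ ⟨A, hA, hSA, rfl⟩
  rintro _ ⟨B, hB, hSB, rfl⟩
  exact setAverage_le_of_forall_le_s9 hB hg.integrableOn (measure_mono_null hSB |>.mt hμS)
    fun x _ => hgc x

end SetAverage

/-- The set `A* = S ∪ {g ≥ Λ_S}` is a maximizer, any maximizer is contained in `A*`
up to a null set, and under the extra condition `μ({g = Λ_S} ∩ Sᶜ) = 0` any maximizer
equals `A*` up to a null set. -/
theorem lambdaSup_maximizer {Γ : Type*} [MeasurableSpace Γ]
    (μ : MeasureTheory.Measure Γ) [IsFiniteMeasure μ]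
    (g : Γ → ℝ) (hgmeas : Measurable g) (C : ℝ) (hgbdd : ∀ x, |g x| ≤ C)
    (S : Set Γ) (hS : MeasurableSet S) (hμS : 0 < μ S)
    (hattained : ∃ A₀ : Set Γ, MeasurableSet A₀ ∧ S ⊆ A₀ ∧
      ⨍ x in A₀, g x ∂μ = lambdaSup μ g S) :
    (⨍ x in S ∪ {x | lambdaSup μ g S ≤ g x}, g x ∂μ = lambdaSup μ g S) ∧
    (∀ Ainf : Set Γ, MeasurableSet Ainf → S ⊆ Ainf →
      ⨍ x in Ainf, g x ∂μ = lambdaSup μ g S →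
      μ (Ainf \ (S ∪ {x | lambdaSup μ g S ≤ g x})) = 0) ∧
    (μ ({x | g x = lambdaSup μ g S} ∩ Sᶜ) = 0 →
      ∀ Ainf : Set Γ, MeasurableSet Ainf → S ⊆ Ainf →
        ⨍ x in Ainf, g x ∂μ = lambdaSup μ g S →
        μ (symmDiff Ainf (S ∪ {x | lambdaSup μ g S ≤ g x})) = 0) := by
  set Λ := lambdaSup μ g S
  set Astar := S ∪ {x | Λ ≤ g x}
  have hg : Integrable g μ := .of_bound hgmeas.aestronglyMeasurable C (ae_of_all _ hgbdd)
  have hAstar : MeasurableSet Astar := hS.union (measurableSet_le measurable_const hgmeas)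
  have hne : ∀ {A}, S ⊆ A → μ A ≠ 0 := fun hSA => (hμS.trans_le (measure_mono hSA)).ne'
  have hE : ∀ {A}, S ⊆ A → ⨍ x in A, g x ∂μ = Λ → ∫ x in A, (g x - Λ) ∂μ = 0 :=
    fun hSA => (setAverage_eq_iff_setIntegral_sub_eq_zero hg.integrableOn (hne hSA)).1
  obtain ⟨A₀, hA₀, hSA₀, hA₀max⟩ := hattained
  have hEAstar : ∫ x in Astar, (g x - Λ) ∂μ = 0 :=
    le_antisymm ((setAverage_le_iff_setIntegral_sub_nonpos hg.integrableOn
        (hne subset_union_left)).1 (setAverage_le_lambdaSup_s9 hg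
          (fun x => (le_abs_self _).trans (hgbdd x)) hμS.ne' hAstar subset_union_left))
      ((hE hSA₀ hA₀max).symm.le.trans
        (setIntegral_sub_le_setIntegral_union_setOf_le hg hA₀ hAstar hSA₀))
  have hae : ∀ A, MeasurableSet A → S ⊆ A → ⨍ x in A, g x ∂μ = Λ →
      μ {x | A.indicator (fun x => g x - Λ) x ≠ Astar.indicator (fun x => g x - Λ) x} = 0 :=
    fun A hA hSA hmax => ae_iff.1 <| indicator_sub_ae_eq_of_setIntegral_eq hg hA hAstar hSA
      (by rw [hE hSA hmax, hEAstar])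
  have hdiff : ∀ A, MeasurableSet A → S ⊆ A → ⨍ x in A, g x ∂μ = Λ → μ (A \ Astar) = 0 :=
    fun A hA hSA hmax =>
      measure_mono_null (fun _ => indicator_sub_ne_of_mem_diff) (hae A hA hSA hmax)
  refine ⟨(setAverage_eq_iff_setIntegral_sub_eq_zero hg.integrableOn
    (hne subset_union_left)).2 hEAstar, hdiff, fun hnull A hA hSA hmax => ?_⟩
  refine measure_union_null (hdiff A hA hSA hmax)
    (measure_mono_null (fun x hx => ?_) (measure_union_null (hae A hA hSA hmax) hnull))
  by_cases hgx : g x = Λ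
  · exact Or.inr ⟨hgx, fun hxS => hx.2 (hSA hxS)⟩
  · exact Or.inl (indicator_sub_ne_of_mem_diff_of_ne hx hgx)
end

section
/- Let Γ be a compact metric space with finite Borel measure μ, g : Γ → ℝ continuous, and S ⊆ Γ open with μ(S) > 0. Define Λ_T := sup { ⨍_A g dμ : A measurable, T ⊆ A } for T with μ(T) > 0, and S_{-δ} := {x : d(x, Sᶜ) ≥ δ}. Then Λ_{S_{-δ}} decreases to Λ_S as δ ↓ 0, i.e. δ ↦ Λ_{S_{-δ}} is non-decreasing in δ and lim_{δ→0} Λ_{S_{-δ}} = Λ_S. -/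
/-!
`Λ` is antitone in the constraint set, and `S_{-δ} ⊆ S`, so `Λ_S ≤ Λ_{S_{-δ}}` and
`δ ↦ Λ_{S_{-δ}}` is non-decreasing. Conversely, a competitor `A ⊇ S_{-δ}` may be replaced by
`A ∪ S`, a competitor for `Λ_S`; adding the piece `S \ A ⊆ S \ S_{-δ}` changes the average by at
most `2 ‖g‖_∞ μ(S \ S_{-δ}) / μ(S)`, which tends to `0` because the open set `S` is the increasing
union of the `S_{-δ}`.
-/

open Set MeasureTheory Filter Topology

section minusSet

variable {X : Type*} [MetricSpace X]

theorem minusSet_antitone (S : Set X) : Antitone (minusSet S) :=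
  fun _ _ hδ _ hx => (ENNReal.ofReal_le_ofReal hδ).trans hx

theorem minusSet_subset {S : Set X} {δ : ℝ} (hδ : 0 < δ) : minusSet S δ ⊆ S := by
  intro x hx
  by_contra hxS
  have hx' : ENNReal.ofReal δ ≤ Metric.infEDist x Sᶜ := hx
  rw [Metric.infEDist_zero_of_mem (mem_compl hxS)] at hx'
  exact (ENNReal.ofReal_pos.mpr hδ).not_ge hx'

theorem isClosed_minusSet (S : Set X) (δ : ℝ) : IsClosed (minusSet S δ) :=
  isClosed_Ici.preimage Metric.continuous_infEDist

theorem biInter_diff_minusSet {S : Set X} (hS : IsOpen S) : ⋂ δ > 0, S \ minusSet S δ = ∅ := by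
  refine eq_empty_iff_forall_notMem.mpr fun x hx => ?_
  simp only [mem_iInter, Set.mem_sdiff] at hx
  have hxS : x ∈ S := (hx 1 one_pos).1
  have hpos : 0 < Metric.infEDist x Sᶜ := by
    rw [Metric.infEDist_pos_iff_notMem_closure, hS.isClosed_compl.closure_eq]
    exact not_not.mpr hxS
  obtain ⟨δ, -, hδ, hδx⟩ := ENNReal.lt_iff_exists_real_btwn.mp hpos
  exact (hx δ (ENNReal.ofReal_pos.mp hδ)).2 hδx.le

variable [MeasurableSpace X] [OpensMeasurableSpace X]

theorem tendsto_measureReal_diff_minusSet (μ : Measure X) {S : Set X} (hS : IsOpen S)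
    (hμS : μ S ≠ ⊤) :
    Tendsto (fun δ => μ.real (S \ minusSet S δ)) (𝓝[>] 0) (𝓝 0) := by
  have h := tendsto_measure_biInter_gt (μ := μ) (s := fun δ => S \ minusSet S δ) (a := 0)
    (fun δ _ => (hS.measurableSet.diff (isClosed_minusSet S δ).measurableSet).nullMeasurableSet)
    (fun _ _ _ hδ => sdiff_subset_sdiff_right (minusSet_antitone S hδ))
    ⟨1, one_pos, measure_ne_top_of_subset sdiff_subset hμS⟩
  rw [biInter_diff_minusSet hS, measure_empty] at h
  exact (ENNReal.tendsto_toReal ENNReal.zero_ne_top).comp h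

end minusSet

section average

variable {Γ : Type*} [MeasurableSpace Γ] {μ : Measure Γ} [IsFiniteMeasure μ] {g : Γ → ℝ} {C : ℝ}

theorem abs_setAverage_le_of_abs_le (hC : 0 ≤ C) (hg : ∀ x, |g x| ≤ C) (A : Set Γ) :
    |⨍ x in A, g x ∂μ| ≤ C := by
  have hI : ‖∫ x in A, g x ∂μ‖ ≤ C * μ.real A :=
    norm_setIntegral_le_of_norm_le_const (measure_lt_top μ A) fun x _ => hg x
  rw [Real.norm_eq_abs] at hI
  rw [setAverage_eq, smul_eq_mul, abs_mul, abs_inv, abs_of_nonneg measureReal_nonneg]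
  calc (μ.real A)⁻¹ * |∫ x in A, g x ∂μ| ≤ (μ.real A)⁻¹ * (C * μ.real A) := by gcongr
    _ = C * (μ.real A / μ.real A) := by ring
    _ ≤ C := mul_le_of_le_one_right hC (div_self_le_one _)

theorem setAverage_sub_setAverage_union (hg : Integrable g μ) {A D : Set Γ} (hAD : Disjoint A D)
    (hD : MeasurableSet D) :
    ⨍ x in A, g x ∂μ - ⨍ x in A ∪ D, g x ∂μ =
      μ.real D / (μ.real A + μ.real D) * (⨍ x in A, g x ∂μ - ⨍ x in D, g x ∂μ) := by
  by_cases h : μ.real A + μ.real D = 0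
  · obtain ⟨hA, hD⟩ := (add_eq_zero_iff_of_nonneg measureReal_nonneg measureReal_nonneg).mp h
    rw [measureReal_eq_zero_iff] at hA hD
    have hAD : μ (A ∪ D) = 0 := measure_union_null hA hD
    simp [h, Measure.restrict_eq_zero.mpr hA, Measure.restrict_eq_zero.mpr hAD]
  · rw [average_union hAD.aedisjoint hD.nullMeasurableSet (measure_ne_top μ A) (measure_ne_top μ D)
      hg.integrableOn hg.integrableOn, smul_eq_mul, smul_eq_mul]
    field_simp
    ring

theorem setAverage_sub_setAverage_union_le (hC : 0 ≤ C) (hg : ∀ x, |g x| ≤ C)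
    (hgi : Integrable g μ) {A D : Set Γ} (hAD : Disjoint A D) (hD : MeasurableSet D) :
    ⨍ x in A, g x ∂μ - ⨍ x in A ∪ D, g x ∂μ ≤ 2 * C * (μ.real D / (μ.real A + μ.real D)) := by
  rw [setAverage_sub_setAverage_union hgi hAD hD]
  have hA := abs_le.mp (abs_setAverage_le_of_abs_le (μ := μ) hC hg A)
  have hD := abs_le.mp (abs_setAverage_le_of_abs_le (μ := μ) hC hg D)
  have hratio : 0 ≤ μ.real D / (μ.real A + μ.real D) := by positivity
  nlinarith

end average

section lambdaSup

variable {Γ : Type*} [MeasurableSpace Γ] {μ : Measure Γ} {g : Γ → ℝ}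

theorem lambdaSup_le {T : Set Γ} {r : ℝ}
    (h : ∀ A, MeasurableSet A → T ⊆ A → ⨍ x in A, g x ∂μ ≤ r) : lambdaSup μ g T ≤ r :=
  csSup_le ⟨_, univ, MeasurableSet.univ, subset_univ T, rfl⟩ <| by
    rintro _ ⟨A, hA, hTA, rfl⟩
    exact h A hA hTA

variable [IsFiniteMeasure μ] {C : ℝ}

theorem setAverage_le_lambdaSup_s11 (hC : 0 ≤ C) (hg : ∀ x, |g x| ≤ C) {T A : Set Γ}
    (hA : MeasurableSet A) (hTA : T ⊆ A) : ⨍ x in A, g x ∂μ ≤ lambdaSup μ g T := by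
  refine le_csSup ⟨C, ?_⟩ ⟨A, hA, hTA, rfl⟩
  rintro _ ⟨B, -, -, rfl⟩
  exact (abs_le.mp (abs_setAverage_le_of_abs_le hC hg B)).2

theorem lambdaSup_anti (hC : 0 ≤ C) (hg : ∀ x, |g x| ≤ C) {T T' : Set Γ} (h : T ⊆ T') :
    lambdaSup μ g T' ≤ lambdaSup μ g T :=
  lambdaSup_le fun _ hA hTA => setAverage_le_lambdaSup_s11 hC hg hA (h.trans hTA)

/-- If `μ S = 0` the correction term is `0` by the convention `x / 0 = 0`; the bound survives
because `S \ A` is then null as well. -/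
theorem lambdaSup_le_lambdaSup_add (hC : 0 ≤ C) (hg : ∀ x, |g x| ≤ C) (hgi : Integrable g μ)
    {T S : Set Γ} (hS : MeasurableSet S) :
    lambdaSup μ g T ≤ lambdaSup μ g S + 2 * C * (μ.real (S \ T) / μ.real S) := by
  refine lambdaSup_le fun A hA hTA => ?_
  have hratio : μ.real (S \ A) / (μ.real A + μ.real (S \ A)) ≤ μ.real (S \ T) / μ.real S := by
    rw [← measureReal_union disjoint_sdiff_right (hS.diff hA), union_sdiff_self]
    rcases (measureReal_nonneg : 0 ≤ μ.real S).eq_or_lt with hS0 | hSpos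
    · have : μ.real (S \ A) = 0 :=
        le_antisymm (hS0 ▸ measureReal_mono sdiff_subset) measureReal_nonneg
      rw [this, zero_div]
      exact div_nonneg measureReal_nonneg measureReal_nonneg
    · exact div_le_div₀ measureReal_nonneg (measureReal_mono (sdiff_subset_sdiff_right hTA))
        hSpos (measureReal_mono subset_union_right)
  have hunion := setAverage_sub_setAverage_union_le hC hg hgi disjoint_sdiff_right (hS.diff hA)
  rw [union_sdiff_self] at hunion
  calc ⨍ x in A, g x ∂μ
      ≤ ⨍ x in A ∪ S, g x ∂μ + 2 * C * (μ.real (S \ A) / (μ.real A + μ.real (S \ A))) := by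
        linarith
    _ ≤ lambdaSup μ g S + 2 * C * (μ.real (S \ T) / μ.real S) := by
        gcongr
        exact setAverage_le_lambdaSup_s11 hC hg (hA.union hS) subset_union_right

end lambdaSup

theorem lambdaSup_inner_continuity_general {Γ : Type*} [MetricSpace Γ] [CompactSpace Γ]
    [MeasurableSpace Γ] [BorelSpace Γ]
    (μ : MeasureTheory.Measure Γ) [IsFiniteMeasure μ]
    (g : Γ → ℝ) (hgcont : Continuous g)
    (S : Set Γ) (hSopen : IsOpen S)
    (δ₀ : ℝ) :
    MonotoneOn (fun δ : ℝ => lambdaSup μ g (minusSet S δ)) (Set.Ioo (0:ℝ) δ₀) ∧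
    Tendsto (fun δ : ℝ => lambdaSup μ g (minusSet S δ)) (nhdsWithin 0 (Set.Ioi 0))
      (nhds (lambdaSup μ g S)) := by
  obtain ⟨C, hC, hgC⟩ := (isCompact_range hgcont).isBounded.exists_pos_norm_le
  have hg : ∀ x, |g x| ≤ C := fun x => hgC _ (mem_range_self x)
  have hgi : Integrable g μ :=
    hgcont.integrable_of_hasCompactSupport (HasCompactSupport.of_compactSpace g)
  refine ⟨fun a _ b _ hab => lambdaSup_anti hC.le hg (minusSet_antitone S hab), ?_⟩
  have hupper : Tendsto
      (fun δ => lambdaSup μ g S + 2 * C * (μ.real (S \ minusSet S δ) / μ.real S))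
      (𝓝[>] 0) (𝓝 (lambdaSup μ g S)) := by
    have hdiff := tendsto_measureReal_diff_minusSet μ hSopen (measure_ne_top μ S)
    simpa using ((hdiff.div_const (μ.real S)).const_mul (2 * C)).const_add (lambdaSup μ g S)
  refine tendsto_of_tendsto_of_tendsto_of_le_of_le' tendsto_const_nhds hupper ?_
    (Eventually.of_forall fun δ => lambdaSup_le_lambdaSup_add hC.le hg hgi hSopen.measurableSet)
  filter_upwards [self_mem_nhdsWithin] with δ hδ using lambdaSup_anti hC.le hg (minusSet_subset hδ)

/-- Continuity of `Λ` along inner approximations: `Λ_{S_{-δ}} ↓ Λ_S` as `δ ↓ 0`. -/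
theorem lambdaSup_inner_continuity {Γ : Type*} [MetricSpace Γ] [CompactSpace Γ]
    [MeasurableSpace Γ] [BorelSpace Γ]
    (μ : MeasureTheory.Measure Γ) [IsFiniteMeasure μ]
    (g : Γ → ℝ) (hgcont : Continuous g)
    (S : Set Γ) (hSopen : IsOpen S) (hμS : 0 < μ S)
    (δ₀ : ℝ) (hδ₀ : 0 < δ₀)
    (hpos : ∀ δ ∈ Set.Ioo (0:ℝ) δ₀, 0 < μ (minusSet S δ)) :
    MonotoneOn (fun δ : ℝ => lambdaSup μ g (minusSet S δ)) (Set.Ioo (0:ℝ) δ₀) ∧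
    Tendsto (fun δ : ℝ => lambdaSup μ g (minusSet S δ)) (nhdsWithin 0 (Set.Ioi 0))
      (nhds (lambdaSup μ g S)) :=
  lambdaSup_inner_continuity_general μ g hgcont S hSopen δ₀
end
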